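/- Consider the generalized fair learning problem: minimize E_{(x,s)∼P_{X,S}}[ TV(Q_{Ŷ|X=x,S=s}, P_{Y|X=x,S=s}) ] over conditional distributions Q_{Ŷ|X,S} subject to ρ_E(Ŷ; S) ≤ ε, where Ŷ is distributed according to Q_{Ŷ|X,S} · P_{X,S} and ρ_E is the chi-squared divergence between the joint distribution of (Ŷ, S) and the product of its marginals. Suppose there exists φ : 𝒳 × 𝒴 → ℝ such that P(X=x | Y=y, S=s) / P(X=x | S=s) = φ(x, y) for all x ∈ 𝒳, y ∈ 𝒴, s ∈ 𝒮, and s_max ∈ 𝒮 satisfies P_S(s_max) = 1/2 + δ for some δ > 0. Then for any optimal solution Q*, with u(ε) = max{ε, √ε}, the induced Ŷ satisfies: E_{s∼P_S}[ TV(P_{Ŷ|S=s}, P_{Y|S=s_max}) ] ≤ (1/2 + 1/(4δ)) · u(ε). -/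

import Mathlib

open Finset

noncomputable section

variable {𝒳 𝒴 𝒮 : Type*} [Fintype 𝒳] [Fintype 𝒴] [Fintype 𝒮]

/-- Total variation distance between two finitely supported distributions on `𝒴`,
`TV(p, q) = (1/2) ∑ y, |p y - q y|`. -/
def TV (p q : 𝒴 → ℝ) : ℝ := (1 / 2) * ∑ y, |p y - q y|

/-- Marginal distribution of `(X, S)` under the joint `P` of `(X, Y, S)`. -/
def margXS (P : 𝒳 → 𝒴 → 𝒮 → ℝ) (x : 𝒳) (s : 𝒮) : ℝ := ∑ y, P x y s

/-- Marginal distribution of `(Y, S)`. -/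
def margYS (P : 𝒳 → 𝒴 → 𝒮 → ℝ) (y : 𝒴) (s : 𝒮) : ℝ := ∑ x, P x y s

/-- Marginal distribution of `S`. -/
def margS (P : 𝒳 → 𝒴 → 𝒮 → ℝ) (s : 𝒮) : ℝ := ∑ x, margXS P x s

/-- Marginal distribution of `X`. -/
def margX (P : 𝒳 → 𝒴 → 𝒮 → ℝ) (x : 𝒳) : ℝ := ∑ s, margXS P x s

/-- Conditional distribution of `Y` given `X = x, S = s`. -/
def condYXS (P : 𝒳 → 𝒴 → 𝒮 → ℝ) (x : 𝒳) (s : 𝒮) (y : 𝒴) : ℝ := P x y s / margXS P x s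

/-- Conditional distribution of `Y` given `S = s`. -/
def condYS (P : 𝒳 → 𝒴 → 𝒮 → ℝ) (s : 𝒮) (y : 𝒴) : ℝ := margYS P y s / margS P s

/-- The ratio `P(X=x | Y=y, S=s) / P(X=x | S=s)`. -/
def condRatio (P : 𝒳 → 𝒴 → 𝒮 → ℝ) (x : 𝒳) (y : 𝒴) (s : 𝒮) : ℝ :=
  (P x y s / margYS P y s) / (margXS P x s / margS P s)

/-- A conditional distribution `Q`: for every `(x, s)`, `Q x s` is a probability
distribution on labels. -/
def IsRule (Q : 𝒳 → 𝒮 → 𝒴 → ℝ) : Prop :=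
  (∀ x s y, 0 ≤ Q x s y) ∧ ∀ x s, ∑ y, Q x s y = 1

/-- The generalized objective: `E_{(x,s)∼P_{X,S}}[TV(Q_{Ŷ|X=x,S=s}, P_{Y|X=x,S=s})]`. -/
def objective (P : 𝒳 → 𝒴 → 𝒮 → ℝ) (Q : 𝒳 → 𝒮 → 𝒴 → ℝ) : ℝ :=
  ∑ x, ∑ s, margXS P x s * TV (Q x s) (condYXS P x s)

/-- Joint distribution of `(Ŷ, S)` induced by `Q · P_{X,S}`. -/
def jointYhatS (P : 𝒳 → 𝒴 → 𝒮 → ℝ) (Q : 𝒳 → 𝒮 → 𝒴 → ℝ) (yh : 𝒴) (s : 𝒮) : ℝ :=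
  ∑ x, margXS P x s * Q x s yh

/-- Marginal distribution of the prediction `Ŷ`. -/
def margYhat (P : 𝒳 → 𝒴 → 𝒮 → ℝ) (Q : 𝒳 → 𝒮 → 𝒴 → ℝ) (yh : 𝒴) : ℝ :=
  ∑ s, jointYhatS P Q yh s

/-- Conditional distribution of the prediction `Ŷ` given `S = s`. -/
def condYhatS (P : 𝒳 → 𝒴 → 𝒮 → ℝ) (Q : 𝒳 → 𝒮 → 𝒴 → ℝ) (s : 𝒮) (yh : 𝒴) : ℝ :=
  jointYhatS P Q yh s / margS P s

/-- Exponential Rényi mutual information (χ²-divergence between the joint distribution of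
`(Ŷ, S)` and the product of its marginals), summed over pairs with positive product of
marginals. -/
def ERMI (P : 𝒳 → 𝒴 → 𝒮 → ℝ) (Q : 𝒳 → 𝒮 → 𝒴 → ℝ) : ℝ :=
  ∑ yh, ∑ s,
    if 0 < margYhat P Q yh * margS P s then
      (jointYhatS P Q yh s - margYhat P Q yh * margS P s) ^ 2 /
        (margYhat P Q yh * margS P s)
    else 0

/-!
Compare the optimal rule `Q` with the rule that predicts `Y` as if the sensitive attribute were
`smax`. Because the likelihood ratio `P(x|y,s)/P(x|s)` does not depend on `s`, that rule makes
`Ŷ` independent of `S` (so it is feasible with `ρ_E = 0`) and its objective is the average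
distance `E_s TV(P_{Y|S=smax}, P_{Y|S=s})`. Optimality of `Q`, the triangle inequality and the
fact that `smax` carries more than half of the mass of `S` then force
`2δ · TV(P_Ŷ, P_{Y|S=smax}) ≤ E_s TV(P_{Ŷ|S=s}, P_Ŷ)`, and by Cauchy–Schwarz the right-hand
side is at most `√ρ_E(Ŷ, S) / 2 ≤ √ε / 2`.
-/

section TotalVariation

variable {𝒴 : Type*} [Fintype 𝒴]

lemma TV_comm (p q : 𝒴 → ℝ) : TV p q = TV q p := by
  simp only [TV, abs_sub_comm]

lemma TV_self (p : 𝒴 → ℝ) : TV p p = 0 := by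
  simp [TV]

lemma TV_triangle (p q r : 𝒴 → ℝ) : TV p r ≤ TV p q + TV q r := by
  simp only [TV, ← mul_add, ← Finset.sum_add_distrib]
  gcongr with y
  exact abs_sub_le _ _ _

lemma mul_TV {c : ℝ} (hc : 0 ≤ c) (p q : 𝒴 → ℝ) :
    c * TV p q = 1 / 2 * ∑ y, |c * p y - c * q y| := by
  simp only [TV, ← mul_sub, abs_mul, abs_of_nonneg hc, ← Finset.mul_sum]
  ring

variable {𝒮 : Type*} [Fintype 𝒮] {w : 𝒮 → ℝ}

lemma sum_mul_TV_triangle (hw : ∀ s, 0 ≤ w s) (p q r : 𝒮 → 𝒴 → ℝ) :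
    ∑ s, w s * TV (p s) (r s) ≤ ∑ s, w s * TV (p s) (q s) + ∑ s, w s * TV (q s) (r s) := by
  rw [← Finset.sum_add_distrib]
  gcongr with s
  rw [← mul_add]
  exact mul_le_mul_of_nonneg_left (TV_triangle _ _ _) (hw s)

/-- If the atom `s₀` carries mass `1/2 + δ`, moving the reference point away from `p s₀` costs
at least `2δ` times the displacement. -/
lemma sum_mul_TV_add_two_mul_TV_le (hw : ∀ s, 0 ≤ w s) (hw1 : ∑ s, w s = 1) {s₀ : 𝒮} {δ : ℝ}
    (hs₀ : w s₀ = 1 / 2 + δ) (p : 𝒮 → 𝒴 → ℝ) (q : 𝒴 → ℝ) :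
    ∑ s, w s * TV (p s₀) (p s) + 2 * δ * TV q (p s₀) ≤ ∑ s, w s * TV q (p s) := by
  have hterm : ∀ s, 0 ≤ w s * (TV q (p s) - TV (p s₀) (p s) + TV q (p s₀)) := fun s =>
    mul_nonneg (hw s) (by linarith [TV_triangle (p s₀) q (p s), TV_comm q (p s₀)])
  have hsum : ∑ s, w s * (TV q (p s) - TV (p s₀) (p s) + TV q (p s₀))
      = ∑ s, w s * TV q (p s) - ∑ s, w s * TV (p s₀) (p s) + TV q (p s₀) := by
    simp only [mul_add, mul_sub, Finset.sum_add_distrib, Finset.sum_sub_distrib,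
      ← Finset.sum_mul, hw1, one_mul]
  have hs₀_le := Finset.single_le_sum (fun s _ => hterm s) (Finset.mem_univ s₀)
  rw [hsum, TV_self, hs₀] at hs₀_le
  linarith

end TotalVariation

lemma sq_sum_abs_sub_le_mul_sum_chiSq {ι : Type*} [Fintype ι] {p q : ι → ℝ}
    (hq : ∀ i, 0 ≤ q i) (hpq : ∀ i, q i = 0 → p i = 0) :
    (∑ i, |p i - q i|) ^ 2
      ≤ (∑ i, q i) * ∑ i, if 0 < q i then (p i - q i) ^ 2 / q i else 0 := by
  refine Finset.sum_sq_le_sum_mul_sum_of_sq_le_mul _ (fun i _ => hq i) (fun i _ => ?_)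
    (fun i _ => ?_)
  · split_ifs with h
    · exact div_nonneg (sq_nonneg _) h.le
    · exact le_rfl
  · split_ifs with h
    · rw [sq_abs, mul_div_cancel₀ _ h.ne']
    · have hqi : q i = 0 := le_antisymm (not_lt.mp h) (hq i)
      simp [hqi, hpq i hqi]

section FairLearning

variable {𝒳 𝒴 𝒮 : Type*} [Fintype 𝒴] {P : 𝒳 → 𝒴 → 𝒮 → ℝ} {Q : 𝒳 → 𝒮 → 𝒴 → ℝ}
  {φ : 𝒳 → 𝒴 → ℝ}

lemma margXS_mul_condYXS (hXS : ∀ x s, 0 < margXS P x s) (x : 𝒳) (s : 𝒮) (y : 𝒴) :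
    margXS P x s * condYXS P x s y = P x y s :=
  mul_div_cancel₀ _ (hXS x s).ne'

lemma isRule_condYXS (hP0 : ∀ x y s, 0 ≤ P x y s) (hXS : ∀ x s, 0 < margXS P x s) (s₀ : 𝒮) :
    IsRule fun x (_ : 𝒮) => condYXS P x s₀ :=
  ⟨fun x _ y => div_nonneg (hP0 x y s₀) (hXS x s₀).le,
    fun x _ => by simp only [condYXS, ← Finset.sum_div]; exact div_self (hXS x s₀).ne'⟩

variable [Fintype 𝒳]

lemma margS_pos [Nonempty 𝒳] (hXS : ∀ x s, 0 < margXS P x s) (s : 𝒮) : 0 < margS P s :=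
  Finset.sum_pos (fun x _ => hXS x s) Finset.univ_nonempty

lemma margS_mul_condYS {s : 𝒮} (hs : 0 < margS P s) (y : 𝒴) :
    margS P s * condYS P s y = margYS P y s :=
  mul_div_cancel₀ _ hs.ne'

lemma jointYhatS_nonneg (hXS : ∀ x s, 0 < margXS P x s) (hQ : IsRule Q) (y : 𝒴) (s : 𝒮) :
    0 ≤ jointYhatS P Q y s :=
  Finset.sum_nonneg fun x _ => mul_nonneg (hXS x s).le (hQ.1 x s y)

lemma margS_mul_TV_condYhatS {s : 𝒮} (hs : 0 < margS P s) (q : 𝒴 → ℝ) :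
    margS P s * TV (condYhatS P Q s) q
      = 1 / 2 * ∑ y, |jointYhatS P Q y s - margS P s * q y| := by
  rw [mul_TV hs.le]
  simp only [condYhatS, mul_div_cancel₀ _ hs.ne']

lemma condRatio_nonneg (hP0 : ∀ x y s, 0 ≤ P x y s) (x : 𝒳) (y : 𝒴) (s : 𝒮) :
    0 ≤ condRatio P x y s := by
  unfold condRatio margS margXS margYS
  exact div_nonneg (div_nonneg (hP0 x y s) (Finset.sum_nonneg fun x _ => hP0 x y s))
    (div_nonneg (Finset.sum_nonneg fun y _ => hP0 x y s)
      (Finset.sum_nonneg fun x _ => Finset.sum_nonneg fun y _ => hP0 x y s))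

/-- Bayes' rule `P(y|x,s) = (P(x|y,s) / P(x|s)) · P(y|s)`. -/
lemma condYXS_eq_mul_condYS [Nonempty 𝒳] (hXS : ∀ x s, 0 < margXS P x s)
    (hYS : ∀ y s, 0 < margYS P y s) (hφ : ∀ x y s, condRatio P x y s = φ x y)
    (x : 𝒳) (s : 𝒮) (y : 𝒴) : condYXS P x s y = φ x y * condYS P s y := by
  have := (hYS y s).ne'
  have := (hXS x s).ne'
  have := (margS_pos hXS s).ne'
  rw [← hφ x y s, condRatio, condYS, condYXS]
  field_simp

lemma sum_margXS_mul_eq_margS [Nonempty 𝒳] (hXS : ∀ x s, 0 < margXS P x s)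
    (hYS : ∀ y s, 0 < margYS P y s) (hfac : ∀ x s y, condYXS P x s y = φ x y * condYS P s y)
    (y : 𝒴) (s : 𝒮) : ∑ x, margXS P x s * φ x y = margS P s := by
  have hm := margS_pos hXS s
  refine mul_right_cancel₀ (b := condYS P s y) (div_pos (hYS y s) hm).ne' ?_
  rw [Finset.sum_mul, margS_mul_condYS hm]
  simp only [mul_assoc, ← hfac, margXS_mul_condYXS hXS]
  rfl

lemma jointYhatS_condYXS [Nonempty 𝒳] (hXS : ∀ x s, 0 < margXS P x s)
    (hYS : ∀ y s, 0 < margYS P y s) (hfac : ∀ x s y, condYXS P x s y = φ x y * condYS P s y)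
    (s₀ : 𝒮) (y : 𝒴) (s : 𝒮) :
    jointYhatS P (fun x _ => condYXS P x s₀) y s = margS P s * condYS P s₀ y := by
  simp only [jointYhatS, hfac, ← mul_assoc, ← Finset.sum_mul,
    sum_margXS_mul_eq_margS hXS hYS hfac]

variable [Fintype 𝒮]

lemma sum_margS_eq_one (hP1 : ∑ x, ∑ y, ∑ s, P x y s = 1) : ∑ s, margS P s = 1 := by
  rw [← hP1]
  simp only [margS, margXS]
  rw [Finset.sum_comm]
  exact Finset.sum_congr rfl fun x _ => Finset.sum_comm

lemma sum_margYhat (hQ : IsRule Q) : ∑ y, margYhat P Q y = ∑ s, margS P s := by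
  simp only [margYhat, jointYhatS, margS]
  rw [Finset.sum_comm]
  refine Finset.sum_congr rfl fun s _ => ?_
  rw [Finset.sum_comm]
  simp only [← Finset.mul_sum, hQ.2, mul_one]

lemma jointYhatS_eq_zero_of_margYhat_eq_zero (hXS : ∀ x s, 0 < margXS P x s) (hQ : IsRule Q)
    {y : 𝒴} (hy : margYhat P Q y = 0) (s : 𝒮) : jointYhatS P Q y s = 0 :=
  (Finset.sum_eq_zero_iff_of_nonneg fun s _ => jointYhatS_nonneg hXS hQ y s).mp hy s
    (Finset.mem_univ s)

lemma ERMI_nonneg : 0 ≤ ERMI P Q :=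
  Finset.sum_nonneg fun _ _ => Finset.sum_nonneg fun _ _ => by
    split_ifs with h
    · exact div_nonneg (sq_nonneg _) h.le
    · exact le_rfl

lemma ERMI_eq_zero_of_jointYhatS_eq (hP1 : ∑ x, ∑ y, ∑ s, P x y s = 1) {r : 𝒴 → ℝ}
    (h : ∀ y s, jointYhatS P Q y s = margS P s * r y) : ERMI P Q = 0 := by
  have hmarg : ∀ y, margYhat P Q y = r y := fun y => by
    simp only [margYhat, h, ← Finset.sum_mul, sum_margS_eq_one hP1, one_mul]
  refine Finset.sum_eq_zero fun y _ => Finset.sum_eq_zero fun s _ => ?_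
  simp [h, hmarg, mul_comm]

lemma two_mul_sum_margS_mul_TV_condYhatS_margYhat_le_sqrt_ERMI [Nonempty 𝒳]
    (hP1 : ∑ x, ∑ y, ∑ s, P x y s = 1) (hXS : ∀ x s, 0 < margXS P x s) (hQ : IsRule Q) :
    2 * ∑ s, margS P s * TV (condYhatS P Q s) (margYhat P Q) ≤ √(ERMI P Q) := by
  have hm := margS_pos hXS
  have hmass : ∑ i : 𝒴 × 𝒮, margYhat P Q i.1 * margS P i.2 = 1 := by
    rw [Fintype.sum_prod_type' fun y s => margYhat P Q y * margS P s, ← Finset.sum_mul_sum,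
      sum_margYhat hQ, sum_margS_eq_one hP1, one_mul]
  have hCS := sq_sum_abs_sub_le_mul_sum_chiSq (p := fun i : 𝒴 × 𝒮 => jointYhatS P Q i.1 i.2)
    (q := fun i => margYhat P Q i.1 * margS P i.2)
    (fun i => mul_nonneg (Finset.sum_nonneg fun s _ => jointYhatS_nonneg hXS hQ i.1 s)
      (hm i.2).le)
    (fun i hi => jointYhatS_eq_zero_of_margYhat_eq_zero hXS hQ
      ((mul_eq_zero.mp hi).resolve_right (hm i.2).ne') i.2)
  rw [hmass, one_mul] at hCS
  simp only [Fintype.sum_prod_type] at hCS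
  have hL1 : 2 * ∑ s, margS P s * TV (condYhatS P Q s) (margYhat P Q)
      = ∑ y, ∑ s, |jointYhatS P Q y s - margYhat P Q y * margS P s| := by
    simp only [margS_mul_TV_condYhatS (hm _), Finset.mul_sum, ← mul_assoc,
      mul_one_div_cancel (two_ne_zero (α := ℝ)), one_mul, mul_comm (margS P _) (margYhat P Q _)]
    exact Finset.sum_comm
  rw [hL1]
  exact Real.le_sqrt_of_sq_le hCS

lemma sum_margS_mul_TV_condYhatS_condYS_le_objective [Nonempty 𝒳]
    (hXS : ∀ x s, 0 < margXS P x s) :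
    ∑ s, margS P s * TV (condYhatS P Q s) (condYS P s) ≤ objective P Q := by
  have hobj : objective P Q = ∑ s, 1 / 2 * ∑ y, ∑ x, |margXS P x s * Q x s y - P x y s| := by
    simp only [objective, mul_TV (hXS _ _).le, margXS_mul_condYXS hXS, Finset.mul_sum]
    rw [Finset.sum_comm]
    refine Finset.sum_congr rfl fun s _ => ?_
    rw [Finset.sum_comm]
  rw [hobj]
  refine Finset.sum_le_sum fun s _ => ?_
  rw [margS_mul_TV_condYhatS (margS_pos hXS s)]
  gcongr with y
  calc |jointYhatS P Q y s - margS P s * condYS P s y|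
      = |∑ x, (margXS P x s * Q x s y - P x y s)| := by
        rw [margS_mul_condYS (margS_pos hXS s), Finset.sum_sub_distrib]; rfl
    _ ≤ ∑ x, |margXS P x s * Q x s y - P x y s| := Finset.abs_sum_le_sum_abs _ _

lemma objective_condYXS [Nonempty 𝒳] (hXS : ∀ x s, 0 < margXS P x s)
    (hYS : ∀ y s, 0 < margYS P y s) (hfac : ∀ x s y, condYXS P x s y = φ x y * condYS P s y)
    (hφ0 : ∀ x y, 0 ≤ φ x y) (s₀ : 𝒮) :
    objective P (fun x _ => condYXS P x s₀)
      = ∑ s, margS P s * TV (condYS P s₀) (condYS P s) := by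
  simp only [objective, TV, hfac, ← mul_sub, abs_mul, abs_of_nonneg (hφ0 _ _), Finset.mul_sum]
  rw [Finset.sum_comm]
  refine Finset.sum_congr rfl fun s _ => ?_
  rw [Finset.sum_comm]
  refine Finset.sum_congr rfl fun y _ => ?_
  rw [← sum_margXS_mul_eq_margS hXS hYS hfac y s, Finset.sum_mul]
  exact Finset.sum_congr rfl fun x _ => by ring

end FairLearning

/-- **Theorem 3 (ERMI case).** In the generalized fair learning problem, if the ratio
`P(x|y,s)/P(x|s)` does not depend on `s` and `P_S(s_max) = 1/2 + δ` with `δ > 0`, then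
any optimal solution among rules with `ρ_E(Ŷ, S) ≤ ε` satisfies, with `u(ε) = max{ε, √ε}`,
`E_{s∼P_S}[TV(P_{Ŷ|S=s}, P_{Y|S=s_max})] ≤ (1/2 + 1/(4δ)) u(ε)`. -/
theorem generalized_ermi_fair_optimal_inductive_bias
    (P : 𝒳 → 𝒴 → 𝒮 → ℝ)
    (hP0 : ∀ x y s, 0 ≤ P x y s)
    (hP1 : ∑ x, ∑ y, ∑ s, P x y s = 1)
    (hXS : ∀ x s, 0 < margXS P x s)
    (hYS : ∀ y s, 0 < margYS P y s)
    (φ : 𝒳 → 𝒴 → ℝ)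
    (hφ : ∀ x y s, condRatio P x y s = φ x y)
    (smax : 𝒮) (δ : ℝ) (hδ : 0 < δ) (hsmax : margS P smax = 1 / 2 + δ)
    (ε : ℝ)
    (Q : 𝒳 → 𝒮 → 𝒴 → ℝ) (hQ : IsRule Q)
    (hfair : ERMI P Q ≤ ε)
    (hopt : ∀ Q' : 𝒳 → 𝒮 → 𝒴 → ℝ, IsRule Q' → ERMI P Q' ≤ ε →
      objective P Q ≤ objective P Q') :
    ∑ s, margS P s * TV (condYhatS P Q s) (condYS P smax)
      ≤ (1 / 2 + 1 / (4 * δ)) * max ε (Real.sqrt ε) := by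
  have : Nonempty 𝒳 :=
    Finset.univ_nonempty_iff.mp (Finset.nonempty_of_sum_ne_zero (hP1 ▸ one_ne_zero))
  have hm : ∀ s, 0 ≤ margS P s := fun s => (margS_pos hXS s).le
  have hm1 := sum_margS_eq_one hP1
  have hfac := condYXS_eq_mul_condYS hXS hYS hφ
  have hφ0 : ∀ x y, 0 ≤ φ x y := fun x y => hφ x y smax ▸ condRatio_nonneg hP0 x y smax
  set B := ∑ s, margS P s * TV (condYhatS P Q s) (margYhat P Q)
  set t := TV (margYhat P Q) (condYS P smax)
  have hB : 2 * B ≤ √ε :=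
    (two_mul_sum_margS_mul_TV_condYhatS_margYhat_le_sqrt_ERMI hP1 hXS hQ).trans
      (Real.sqrt_le_sqrt hfair)
  have hG : ∑ s, margS P s * TV (condYhatS P Q s) (condYS P smax) ≤ B + t := by
    simpa only [← Finset.sum_mul, hm1, one_mul] using
      sum_mul_TV_triangle hm (condYhatS P Q) (fun _ => margYhat P Q) (fun _ => condYS P smax)
  have ht : 2 * δ * t ≤ B := by
    have hbayes := hopt _ (isRule_condYXS hP0 hXS smax) (by
      rw [ERMI_eq_zero_of_jointYhatS_eq hP1 (jointYhatS_condYXS hXS hYS hfac smax)]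
      exact ERMI_nonneg.trans hfair)
    rw [objective_condYXS hXS hYS hfac hφ0] at hbayes
    have hA := sum_margS_mul_TV_condYhatS_condYS_le_objective (Q := Q) hXS
    have hC := sum_mul_TV_triangle hm (fun _ => margYhat P Q) (condYhatS P Q) (condYS P)
    have hmed := sum_mul_TV_add_two_mul_TV_le hm hm1 hsmax (condYS P) (margYhat P Q)
    simp only [TV_comm (margYhat P Q) (condYhatS P Q _)] at hC
    linarith
  have ht' : t ≤ 1 / (4 * δ) * (2 * B) := by
    rw [one_div_mul_eq_div, le_div_iff₀ (by positivity)]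
    linarith
  calc ∑ s, margS P s * TV (condYhatS P Q s) (condYS P smax) ≤ B + t := hG
    _ ≤ (1 / 2 + 1 / (4 * δ)) * (2 * B) := by linarith
    _ ≤ (1 / 2 + 1 / (4 * δ)) * max ε (Real.sqrt ε) := by
      gcongr
      exact hB.trans (le_max_right _ _)
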